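/- Let A ∈ ℝ^{m×n}, x* ∈ ℝⁿ, T ⊆ {1,...,n}, N = supp(x*), Δ = N\T, y = A x*. Then x* is the unique minimizer of ‖x_{Tᶜ}‖₁ subject to Ax = y if and only if for every I ⊆ Δ and every δ ∈ ℝⁿ satisfying Aδ = 0, ‖δ‖₁ = 1, δ_k x*_k > 0 for all k ∈ I, and δ_k x*_k ≤ 0 for all k ∈ Δ\I, it holds that ∑_{k ∈ Tᶜ\I} |δ_k| > ∑_{k ∈ I} |δ_k|. -/

import Mathlib

/-!
Write a feasible point as `x* - h` with `A h = 0`, and let `I` be the set of indices of `Tᶜ`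
where `h` and `x*` have strictly the same sign. On `I` the objective `∑_{Tᶜ} |x_k|` drops by at
most `|h_k|`, elsewhere on `Tᶜ` it grows by exactly `|h_k|`, so `x*` wins as soon as
`∑_{I} |h| < ∑_{Tᶜ \ I} |h|`, a condition invariant under scaling `h`. Conversely, for a
direction `δ` violating the condition, a small step `x* - t δ` keeps the signs on `I`, where
the drop is then exactly `t |δ_k|`, and does not increase the objective.
-/

open Finset

section AbsSub

variable {R : Type*} [Ring R] [LinearOrder R] [IsStrictOrderedRing R] {a b : R}

theorem abs_sub_eq_abs_add_abs_of_mul_nonpos (h : a * b ≤ 0) : |a - b| = |a| + |b| := by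
  rw [sub_eq_add_neg, ← abs_neg b, abs_add_eq_add_abs_iff]
  rcases mul_nonpos_iff.mp h with ⟨ha, hb⟩ | ⟨ha, hb⟩
  · exact Or.inl ⟨ha, neg_nonneg.mpr hb⟩
  · exact Or.inr ⟨ha, neg_nonpos.mpr hb⟩

theorem abs_sub_eq_abs_sub_abs_of_mul_nonneg (h : 0 ≤ a * b) (hba : |b| ≤ |a|) :
    |a - b| = |a| - |b| := by
  rcases mul_nonneg_iff.mp h with ⟨ha, hb⟩ | ⟨ha, hb⟩
  · rw [abs_of_nonneg ha, abs_of_nonneg hb] at hba ⊢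
    exact abs_of_nonneg (sub_nonneg.mpr hba)
  · rw [abs_of_nonpos ha, abs_of_nonpos hb] at hba ⊢
    rw [abs_of_nonpos (sub_nonpos.mpr (neg_le_neg_iff.mp hba))]
    abel

end AbsSub

section SumAbsSub

variable {ι R : Type*} [DecidableEq ι] [CommRing R] [LinearOrder R] [IsStrictOrderedRing R]
  {s I : Finset ι} {x h : ι → R}

theorem sum_abs_sub_le_of_mul_nonneg (hIs : I ⊆ s)
    (hI : ∀ k ∈ I, 0 ≤ x k * h k ∧ |h k| ≤ |x k|) :
    ∑ k ∈ s, |x k - h k| ≤ ∑ k ∈ s, |x k| - ∑ k ∈ I, |h k| + ∑ k ∈ s \ I, |h k| := by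
  have hon : ∑ k ∈ I, |x k - h k| = ∑ k ∈ I, |x k| - ∑ k ∈ I, |h k| := by
    rw [← sum_sub_distrib]
    exact sum_congr rfl fun k hk ↦ abs_sub_eq_abs_sub_abs_of_mul_nonneg (hI k hk).1 (hI k hk).2
  have hoff : ∑ k ∈ s \ I, |x k - h k| ≤ ∑ k ∈ s \ I, |x k| + ∑ k ∈ s \ I, |h k| := by
    rw [← sum_add_distrib]
    exact sum_le_sum fun k _ ↦ abs_sub _ _
  rw [← sum_sdiff hIs (f := fun k ↦ |x k - h k|), ← sum_sdiff hIs (f := fun k ↦ |x k|)]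
  linarith

theorem le_sum_abs_sub_of_mul_nonpos (hIs : I ⊆ s) (hI : ∀ k ∈ s \ I, x k * h k ≤ 0) :
    ∑ k ∈ s, |x k| - ∑ k ∈ I, |h k| + ∑ k ∈ s \ I, |h k| ≤ ∑ k ∈ s, |x k - h k| := by
  have hon : ∑ k ∈ I, |x k| - ∑ k ∈ I, |h k| ≤ ∑ k ∈ I, |x k - h k| := by
    rw [← sum_sub_distrib]
    exact sum_le_sum fun k _ ↦ abs_sub_abs_le_abs_sub _ _
  have hoff : ∑ k ∈ s \ I, |x k - h k| = ∑ k ∈ s \ I, |x k| + ∑ k ∈ s \ I, |h k| := by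
    rw [← sum_add_distrib]
    exact sum_congr rfl fun k hk ↦ abs_sub_eq_abs_add_abs_of_mul_nonpos (hI k hk)
  rw [← sum_sdiff hIs (f := fun k ↦ |x k - h k|), ← sum_sdiff hIs (f := fun k ↦ |x k|)]
  linarith

end SumAbsSub

open Filter Topology in
theorem exists_pos_forall_mul_le {ι : Type*} (I : Finset ι) {a b : ι → ℝ}
    (ha : ∀ k ∈ I, 0 < a k) : ∃ t > 0, ∀ k ∈ I, t * b k ≤ a k := by
  have hsmall : ∀ k ∈ I, ∀ᶠ t in 𝓝[>] (0 : ℝ), t * b k ≤ a k := by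
    intro k hk
    have hlim : Tendsto (fun t : ℝ ↦ t * b k) (𝓝[>] 0) (𝓝 0) := by
      simpa using ((continuous_mul_const (b k)).tendsto 0).mono_left nhdsWithin_le_nhds
    exact hlim.eventually (ge_mem_nhds (ha k hk))
  obtain ⟨t, htI, ht⟩ :=
    ((eventually_all_finset I).mpr hsmall).and self_mem_nhdsWithin |>.exists
  exact ⟨t, ht, htI⟩

section ModifiedCS

variable {ι κ : Type*} [Fintype ι] [DecidableEq ι]

def ModCSRecovers (A : Matrix κ ι ℝ) (xstar : ι → ℝ) (T : Finset ι) : Prop :=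
  ∀ x : ι → ℝ, A.mulVec x = A.mulVec xstar → x ≠ xstar →
    ∑ k ∈ Tᶜ, |xstar k| < ∑ k ∈ Tᶜ, |x k|

def ModCSNullSpaceCondition (A : Matrix κ ι ℝ) (xstar : ι → ℝ) (T : Finset ι) : Prop :=
  ∀ (I : Finset ι), (∀ k ∈ I, xstar k ≠ 0 ∧ k ∉ T) →
    ∀ δ : ι → ℝ, A.mulVec δ = 0 → (∑ k, |δ k|) = 1 →
      (∀ k ∈ I, δ k * xstar k > 0) →
      (∀ k, xstar k ≠ 0 → k ∉ T → k ∉ I → δ k * xstar k ≤ 0) →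
      ∑ k ∈ I, |δ k| < ∑ k ∈ Tᶜ \ I, |δ k|

variable {A : Matrix κ ι ℝ} {xstar : ι → ℝ} {T : Finset ι}

theorem ModCSRecovers.nullSpaceCondition (hrec : ModCSRecovers A xstar T) :
    ModCSNullSpaceCondition A xstar T := by
  intro I hI δ hAδ hnorm hpos _
  have hIT : I ⊆ Tᶜ := fun k hk ↦ mem_compl.mpr (hI k hk).2
  obtain ⟨t, ht, htI⟩ :=
    exists_pos_forall_mul_le I (a := fun k ↦ |xstar k|) (b := fun k ↦ |δ k|)
    fun k hk ↦ abs_pos.mpr (hI k hk).1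
  have hδ : δ ≠ 0 := by rintro rfl; simp at hnorm
  have hlt := hrec (xstar - t • δ)
    (by rw [Matrix.mulVec_sub, Matrix.mulVec_smul, hAδ, smul_zero, sub_zero])
    (by simpa [ht.ne'] using hδ)
  have hle := sum_abs_sub_le_of_mul_nonneg (x := xstar) (h := t • δ) hIT fun k hk ↦ by
    simp only [Pi.smul_apply, smul_eq_mul, abs_mul, abs_of_pos ht]
    exact ⟨by linarith [mul_pos ht (hpos k hk)], htI k hk⟩
  simp only [Pi.sub_apply, Pi.smul_apply, smul_eq_mul, abs_mul, abs_of_pos ht, ← mul_sum]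
    at hlt hle
  exact lt_of_mul_lt_mul_left (by linarith) ht.le

theorem ModCSNullSpaceCondition.recovers (hcond : ModCSNullSpaceCondition A xstar T) :
    ModCSRecovers A xstar T := by
  intro x hAx hne
  obtain ⟨h, rfl⟩ : ∃ h, x = xstar - h := ⟨xstar - x, (sub_sub_cancel _ _).symm⟩
  have hAh : A.mulVec h = 0 := by
    rwa [Matrix.mulVec_sub, sub_eq_self] at hAx
  have hhpos : 0 < ∑ k, |h k| := by
    obtain ⟨k, hk⟩ := Function.ne_iff.mp (mt sub_eq_self.mpr hne)
    exact sum_pos' (fun _ _ ↦ abs_nonneg _) ⟨k, mem_univ k, abs_pos.mpr hk⟩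
  set c := (∑ k, |h k|)⁻¹
  have hc : 0 < c := inv_pos.mpr hhpos
  set I := Tᶜ.filter fun k ↦ 0 < h k * xstar k
  have hI : ∀ k ∈ I, xstar k ≠ 0 ∧ k ∉ T := fun k hk ↦ by
    obtain ⟨hkT, hk⟩ := mem_filter.mp hk
    exact ⟨right_ne_zero_of_mul hk.ne', mem_compl.mp hkT⟩
  have hpos : ∀ k ∈ I, (c • h) k * xstar k > 0 := fun k hk ↦ by
    rw [Pi.smul_apply, smul_eq_mul, mul_assoc]
    exact mul_pos hc (mem_filter.mp hk).2
  have hnonpos : ∀ k, xstar k ≠ 0 → k ∉ T → k ∉ I → (c • h) k * xstar k ≤ 0 :=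
    fun k _ hkT hkI ↦ by
      rw [Pi.smul_apply, smul_eq_mul, mul_assoc]
      exact mul_nonpos_of_nonneg_of_nonpos hc.le
        (not_lt.mp fun hk ↦ hkI (mem_filter.mpr ⟨mem_compl.mpr hkT, hk⟩))
  have hnorm : ∑ k, |(c • h) k| = 1 := by
    simp only [Pi.smul_apply, smul_eq_mul, abs_mul, abs_of_pos hc, ← mul_sum]
    exact inv_mul_cancel₀ hhpos.ne'
  have hkey := hcond I hI (c • h) (by rw [Matrix.mulVec_smul, hAh, smul_zero]) hnorm hpos hnonpos
  simp only [Pi.smul_apply, smul_eq_mul, abs_mul, abs_of_pos hc, ← mul_sum] at hkey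
  have hge := le_sum_abs_sub_of_mul_nonpos (I := I) (x := xstar) (h := h) (filter_subset _ _)
    fun k hk ↦ by
      simp only [I, mem_sdiff, mem_filter, not_and, not_lt] at hk
      linarith [hk.2 hk.1]
  simp only [Pi.sub_apply]
  linarith [lt_of_mul_lt_mul_left hkey hc.le]

end ModifiedCS

/-- Theorem 1: sufficient and necessary condition for exact recovery. -/
theorem stmt_5 {m n : ℕ} (A : Matrix (Fin m) (Fin n) ℝ) (xstar : Fin n → ℝ)
    (T : Finset (Fin n)) :
    (∀ x : Fin n → ℝ, A.mulVec x = A.mulVec xstar → x ≠ xstar →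
        ∑ k ∈ Tᶜ, |xstar k| < ∑ k ∈ Tᶜ, |x k|)
    ↔ (∀ (I : Finset (Fin n)), (∀ k ∈ I, xstar k ≠ 0 ∧ k ∉ T) →
        ∀ δ : Fin n → ℝ, A.mulVec δ = 0 → (∑ k, |δ k|) = 1 →
          (∀ k ∈ I, δ k * xstar k > 0) →
          (∀ k, xstar k ≠ 0 → k ∉ T → k ∉ I → δ k * xstar k ≤ 0) →
          ∑ k ∈ I, |δ k| < ∑ k ∈ Tᶜ \ I, |δ k|) :=
  ⟨ModCSRecovers.nullSpaceCondition, ModCSNullSpaceCondition.recovers⟩
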